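/- If X ∈ 𝒢 is a Golden codeword whose image in the quotient 𝒢/(1+i)𝒢 ≅ M₂(𝔽₂) is nonzero and non-invertible, then |det(X)|² ≥ 2/5. -/

import Mathlib

open Matrix

/-- The golden number θ = (1+√5)/2, as a complex number. -/
noncomputable def gold : ℂ := (1 + Real.sqrt 5) / 2

/-- Squared Frobenius norm of a 2×2 complex matrix. -/
noncomputable def fro2 (M : Matrix (Fin 2) (Fin 2) ℂ) : ℝ :=
  ∑ i, ∑ j, ‖M i j‖ ^ 2

/-- The element `a + bθ + i(c + dθ)` of `ℤ[i,θ]`. -/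
noncomputable def zit (a b c d : ℤ) : ℂ :=
  (a : ℂ) + b * gold + Complex.I * ((c : ℂ) + d * gold)

/-- Its conjugate under `θ ↦ 1 − θ`. -/
noncomputable def zitBar (a b c d : ℤ) : ℂ :=
  (a : ℂ) + b * (1 - gold) + Complex.I * ((c : ℂ) + d * (1 - gold))

/-- The matrix `[[w₁, w₂], [i·w̄₂, w̄₁]]` of the order `𝒪`, with
`w₁ = a + bθ + i(c+dθ)` and `w₂ = e + fθ + i(g+hθ)`. -/
noncomputable def Omat (a b c d e f g h : ℤ) : Matrix (Fin 2) (Fin 2) ℂ :=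
  !![zit a b c d, zit e f g h;
     Complex.I * zitBar e f g h, zitBar a b c d]

/-- Membership in the order `𝒪`. -/
def inO (W : Matrix (Fin 2) (Fin 2) ℂ) : Prop :=
  ∃ a b c d e f g h : ℤ, W = Omat a b c d e f g h

/-- `α = 1 + i·θ̄ = 1 + i(1−θ)`. -/
noncomputable def alphaG : ℂ := 1 + Complex.I * (1 - gold)

/-- `ᾱ = 1 + i·θ`. -/
noncomputable def alphaBarG : ℂ := 1 + Complex.I * gold

/-- `A = diag(α, ᾱ)`. -/
noncomputable def Amat : Matrix (Fin 2) (Fin 2) ℂ := !![alphaG, 0; 0, alphaBarG]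

/-- Membership in the Golden Code `𝒢 = (1/√5)·A·𝒪`. -/
def inG (X : Matrix (Fin 2) (Fin 2) ℂ) : Prop :=
  ∃ W, inO W ∧ X = ((Real.sqrt 5 : ℂ))⁻¹ • (Amat * W)


/-! Write `X = (1/√5)·A·W` with `W ∈ 𝒪`. Then `det(√5·X) = (2+i)·G` with `G = det W ∈ ℤ[i]`, so
`|det X|² = |G|²/5`. After completing squares, `det W = 0` reads `A² − 5B² = i(C² − 5D²)` over
`ℤ[i]`, which has only the trivial solution by infinite descent at the prime `2 + i`, as `3` is not
a square mod `5`; hence `G ≠ 0`. Since `2 + i ≡ 1 mod 1 + i`, the hypothesis `(1+i) ∣ (2+i)·G`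
gives `(1+i) ∣ G`, hence `|G|² ≥ 2`. -/

open GaussianInt Zsqrtd

local notation "ℤ[i]" => GaussianInt

theorem eq_zero_of_forall_pow_dvd {α : Type*} [CommMonoidWithZero α] [IsCancelMulZero α]
    [WfDvdMonoid α] {a b : α} (ha : ¬IsUnit a) (h : ∀ k, a ^ k ∣ b) : b = 0 := by
  by_contra hb
  exact FiniteMultiplicity.not_iff_forall.mpr h (.of_not_isUnit ha hb)

theorem ZMod.eq_zero_of_sq_eq_three_mul_sq :
    ∀ u v : ZMod 5, u ^ 2 = 3 * v ^ 2 → u = 0 ∧ v = 0 := by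
  decide

namespace GaussianInt

/-- Reduction modulo the prime `2 + i`. -/
def toZMod5 : ℤ[i] →+* ZMod 5 := Zsqrtd.lift ⟨3, by decide⟩

lemma toZMod5_apply (z : ℤ[i]) : toZMod5 z = z.re + z.im * 3 := by
  simp [toZMod5, Zsqrtd.lift]

lemma toZMod5_sqrtd : toZMod5 sqrtd = 3 := by
  simp [toZMod5_apply]

lemma toZMod5_five : toZMod5 5 = 0 := by
  rw [map_ofNat]; decide

lemma toZMod5_two_add_i : toZMod5 ⟨2, 1⟩ = 0 := by
  rw [toZMod5_apply]; decide

lemma toZMod5_two_sub_i : toZMod5 ⟨2, -1⟩ = -1 := by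
  rw [toZMod5_apply]; decide

lemma two_add_i_dvd_of_toZMod5_eq_zero {z : ℤ[i]} (h : toZMod5 z = 0) :
    (⟨2, 1⟩ : ℤ[i]) ∣ z := by
  obtain ⟨a, b⟩ := z
  rw [toZMod5_apply] at h
  obtain ⟨m, hm⟩ : (5 : ℤ) ∣ a + 3 * b := by
    refine (ZMod.intCast_zmod_eq_zero_iff_dvd _ 5).mp ?_
    push_cast
    linear_combination h
  exact ⟨⟨2 * m - b, b - m⟩, by ext <;> simp <;> omega⟩

lemma two_add_i_dvd_of_sq_eq_three_mul_sq {x y : ℤ[i]}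
    (h : toZMod5 x ^ 2 = 3 * toZMod5 y ^ 2) : (⟨2, 1⟩ : ℤ[i]) ∣ x ∧ (⟨2, 1⟩ : ℤ[i]) ∣ y :=
  (ZMod.eq_zero_of_sq_eq_three_mul_sq _ _ h).imp two_add_i_dvd_of_toZMod5_eq_zero
    two_add_i_dvd_of_toZMod5_eq_zero

lemma two_add_i_ne_zero : (⟨2, 1⟩ : ℤ[i]) ≠ 0 := by decide

lemma not_isUnit_two_add_i : ¬IsUnit (⟨2, 1⟩ : ℤ[i]) := by
  rw [← Zsqrtd.norm_eq_one_iff]; decide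

lemma five_eq_two_add_i_mul_two_sub_i : (5 : ℤ[i]) = ⟨2, 1⟩ * ⟨2, -1⟩ := by decide

lemma exists_descent_of_sq_sub_five_sq_eq {A B C D : ℤ[i]}
    (h : A ^ 2 - 5 * B ^ 2 = sqrtd * (C ^ 2 - 5 * D ^ 2)) :
    ∃ A' B' C' D' : ℤ[i], A = ⟨2, 1⟩ * A' ∧ B = ⟨2, 1⟩ * B' ∧ C = ⟨2, 1⟩ * C' ∧
      D = ⟨2, 1⟩ * D' ∧ A' ^ 2 - 5 * B' ^ 2 = sqrtd * (C' ^ 2 - 5 * D' ^ 2) := by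
  have hAC : toZMod5 A ^ 2 = 3 * toZMod5 C ^ 2 := by
    simpa [toZMod5_sqrtd, toZMod5_five] using congrArg toZMod5 h
  obtain ⟨⟨A', rfl⟩, ⟨C', rfl⟩⟩ := two_add_i_dvd_of_sq_eq_three_mul_sq hAC
  have hBD' : (⟨2, 1⟩ : ℤ[i]) * (A' ^ 2 - sqrtd * C' ^ 2) = ⟨2, -1⟩ * (B ^ 2 - sqrtd * D ^ 2) := by
    refine mul_left_cancel₀ two_add_i_ne_zero ?_
    linear_combination h + (B ^ 2 - sqrtd * D ^ 2) * five_eq_two_add_i_mul_two_sub_i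
  have hBD : toZMod5 B ^ 2 = 3 * toZMod5 D ^ 2 := by
    have := congrArg toZMod5 hBD'
    simp only [map_mul, map_sub, map_pow, toZMod5_sqrtd, toZMod5_two_add_i,
      toZMod5_two_sub_i] at this
    linear_combination this
  obtain ⟨⟨B', rfl⟩, ⟨D', rfl⟩⟩ := two_add_i_dvd_of_sq_eq_three_mul_sq hBD
  refine ⟨A', B', C', D', rfl, rfl, rfl, rfl, mul_left_cancel₀ (pow_ne_zero 2 two_add_i_ne_zero) ?_⟩
  linear_combination h

lemma two_add_i_pow_dvd_of_sq_sub_five_sq_eq (k : ℕ) {A B C D : ℤ[i]}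
    (h : A ^ 2 - 5 * B ^ 2 = sqrtd * (C ^ 2 - 5 * D ^ 2)) :
    (⟨2, 1⟩ : ℤ[i]) ^ k ∣ A ∧ (⟨2, 1⟩ : ℤ[i]) ^ k ∣ B ∧ (⟨2, 1⟩ : ℤ[i]) ^ k ∣ C ∧
      (⟨2, 1⟩ : ℤ[i]) ^ k ∣ D := by
  induction k generalizing A B C D with
  | zero => simp
  | succ k ih =>
    obtain ⟨A', B', C', D', rfl, rfl, rfl, rfl, h'⟩ := exists_descent_of_sq_sub_five_sq_eq h
    obtain ⟨hA, hB, hC, hD⟩ := ih h'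
    rw [pow_succ']
    exact ⟨mul_dvd_mul_left _ hA, mul_dvd_mul_left _ hB, mul_dvd_mul_left _ hC,
      mul_dvd_mul_left _ hD⟩

theorem eq_zero_of_sq_sub_five_sq_eq {A B C D : ℤ[i]}
    (h : A ^ 2 - 5 * B ^ 2 = sqrtd * (C ^ 2 - 5 * D ^ 2)) :
    A = 0 ∧ B = 0 ∧ C = 0 ∧ D = 0 := by
  have hdvd := two_add_i_pow_dvd_of_sq_sub_five_sq_eq (h := h)
  refine ⟨?_, ?_, ?_, ?_⟩ <;> refine eq_zero_of_forall_pow_dvd not_isUnit_two_add_i fun k => ?_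
  exacts [(hdvd k).1, (hdvd k).2.1, (hdvd k).2.2.1, (hdvd k).2.2.2]

/-- The relative norm of `s + tθ` from `ℤ[i, θ]` down to `ℤ[i]`. -/
def goldenNorm (s t : ℤ[i]) : ℤ[i] := s ^ 2 + s * t - t ^ 2

theorem eq_zero_of_goldenNorm_eq {s₁ t₁ s₂ t₂ : ℤ[i]}
    (h : goldenNorm s₁ t₁ = sqrtd * goldenNorm s₂ t₂) :
    s₁ = 0 ∧ t₁ = 0 ∧ s₂ = 0 ∧ t₂ = 0 := by
  obtain ⟨h₁, rfl, h₂, rfl⟩ := eq_zero_of_sq_sub_five_sq_eq (A := 2 * s₁ + t₁) (B := t₁)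
    (C := 2 * s₂ + t₂) (D := t₂) (by unfold goldenNorm at h; linear_combination 4 * h)
  simp_all

lemma toComplex_sqrtd : ((sqrtd : ℤ[i]) : ℂ) = Complex.I := by
  simp [toComplex_def]

end GaussianInt

lemma sqrt5_sq : (Real.sqrt 5 : ℂ) ^ 2 = 5 := by
  rw [← Complex.ofReal_pow]; norm_num

lemma gold_sq : gold ^ 2 = gold + 1 := by
  unfold gold; linear_combination sqrt5_sq / 4

lemma zit_mul_zitBar (a b c d : ℤ) :
    zit a b c d * zitBar a b c d = (goldenNorm ⟨a, c⟩ ⟨b, d⟩ : ℤ[i]) := by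
  simp only [zit, zitBar, goldenNorm, map_sub, map_add, map_mul, map_pow, toComplex_def']
  linear_combination (-((b : ℂ) + d * Complex.I) ^ 2) * gold_sq

lemma det_Omat (a b c d e f g h : ℤ) :
    (Omat a b c d e f g h).det =
      ((goldenNorm ⟨a, c⟩ ⟨b, d⟩ - sqrtd * goldenNorm ⟨e, g⟩ ⟨f, h⟩ : ℤ[i]) : ℂ) := by
  rw [Omat, det_fin_two_of, toComplex_sub, toComplex_mul, toComplex_sqrtd, ← zit_mul_zitBar,
    ← zit_mul_zitBar]
  ring

lemma Omat_eq_zero_of_det_eq_zero {a b c d e f g h : ℤ} (h0 : (Omat a b c d e f g h).det = 0) :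
    Omat a b c d e f g h = 0 := by
  rw [det_Omat, toComplex_eq_zero, sub_eq_zero] at h0
  have hzero := eq_zero_of_goldenNorm_eq h0
  simp only [Zsqrtd.ext_iff, Zsqrtd.re_zero, Zsqrtd.im_zero] at hzero
  obtain ⟨⟨rfl, rfl⟩, ⟨rfl, rfl⟩, ⟨rfl, rfl⟩, ⟨rfl, rfl⟩⟩ := hzero
  ext i j
  fin_cases i <;> fin_cases j <;> simp [Omat, zit, zitBar]

lemma det_Amat : Amat.det = ((⟨2, 1⟩ : ℤ[i]) : ℂ) := by
  rw [Amat, det_fin_two_of, alphaG, alphaBarG, toComplex_def']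
  push_cast
  linear_combination gold_sq + (gold - gold ^ 2) * Complex.I_sq

lemma det_sqrt5_smul (X : Matrix (Fin 2) (Fin 2) ℂ) :
    ((Real.sqrt 5 : ℂ) • X).det = 5 * X.det := by
  rw [det_smul, Fintype.card_fin, sqrt5_sq]

lemma exists_det_eq_of_inG {X : Matrix (Fin 2) (Fin 2) ℂ} (hX : inG X) (h0 : X ≠ 0) :
    ∃ G : ℤ[i], G ≠ 0 ∧ 5 * X.det = ((⟨2, 1⟩ * G : ℤ[i]) : ℂ) := by
  obtain ⟨_, ⟨a, b, c, d, e, f, g, h, rfl⟩, rfl⟩ := hX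
  refine ⟨goldenNorm ⟨a, c⟩ ⟨b, d⟩ - sqrtd * goldenNorm ⟨e, g⟩ ⟨f, h⟩, fun hG => h0 ?_, ?_⟩
  · rw [Omat_eq_zero_of_det_eq_zero (by rw [det_Omat, hG, toComplex_zero]), mul_zero, smul_zero]
  · rw [← det_sqrt5_smul, smul_smul, mul_inv_cancel₀ (by simp), one_smul, det_mul, det_Amat,
      det_Omat, toComplex_mul]

theorem det_noninvertible_class_general (X : Matrix (Fin 2) (Fin 2) ℂ)
    (hX : inG X) (h0 : X ≠ 0)
    (hnoninv : ∃ p q : ℤ,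
      ((Real.sqrt 5 : ℂ) • X).det = (1 + Complex.I) * ((p : ℂ) + (q : ℂ) * Complex.I)) :
    2 / 5 ≤ ‖X.det‖ ^ 2 := by
  obtain ⟨G, hG, hdet⟩ := exists_det_eq_of_inG hX h0
  obtain ⟨p, q, hpq⟩ := hnoninv
  have hdvd : (⟨2, 1⟩ * G : ℤ[i]) = ⟨1, 1⟩ * ⟨p, q⟩ := by
    rw [← toComplex_inj, ← hdet, ← det_sqrt5_smul, hpq, toComplex_mul, toComplex_def' 1 1,
      toComplex_def']
    push_cast
    ring
  -- `2 + i ≡ 1` modulo `1 + i`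
  obtain ⟨M, rfl⟩ : (⟨1, 1⟩ : ℤ[i]) ∣ G := by
    have h : (⟨2, 1⟩ : ℤ[i]) = ⟨1, 1⟩ + 1 := by decide
    exact ⟨⟨p, q⟩ - G, by linear_combination hdvd - G * h⟩
  have hM : (1 : ℝ) ≤ M.norm := by exact_mod_cast norm_pos.mpr (right_ne_zero_of_mul hG)
  calc (2 / 5 : ℝ) ≤ 2 / 5 * (M.norm : ℝ) := by linarith
    _ = ‖X.det‖ ^ 2 := by
      rw [Complex.sq_norm, show X.det = 5 * X.det / 5 by ring, hdet, Complex.normSq_div,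
        ← intCast_real_norm, Zsqrtd.norm_mul, Zsqrtd.norm_mul,
        show (⟨2, 1⟩ : ℤ[i]).norm = 5 by decide, show (⟨1, 1⟩ : ℤ[i]).norm = 2 by decide]
      push_cast
      rw [Complex.normSq_ofNat]
      ring

/-- If a Golden codeword `X ∈ 𝒢` has nonzero, non-invertible image in the quotient
`𝒢/(1+i)𝒢 ≅ M₂(𝔽₂)` — i.e. `X ∉ (1+i)𝒢` and `det(√5·X) ∈ (1+i)ℤ[i]` — then
`|det X|² ≥ 2/5`. -/
theorem det_noninvertible_class (X : Matrix (Fin 2) (Fin 2) ℂ)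
    (hX : inG X) (h0 : X ≠ 0)
    (hnonzero : ¬ ∃ Y, inG Y ∧ X = (1 + Complex.I) • Y)
    (hnoninv : ∃ p q : ℤ,
      ((Real.sqrt 5 : ℂ) • X).det = (1 + Complex.I) * ((p : ℂ) + (q : ℂ) * Complex.I)) :
    2 / 5 ≤ ‖X.det‖ ^ 2 :=
  det_noninvertible_class_general X hX h0 hnoninv
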